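/- Fix γ ∈ ℝ, γ ≠ 0. For smooth functions f, g : ℝ³ → ℝ (coordinates (H,x,y)) define the bracket {f,g}(H,x,y) := x·(∂_H f · ∂_x g − ∂_x f · ∂_H g) − y·(∂_H f · ∂_y g − ∂_y f · ∂_H g) + (sinh(γH)/γ)·(∂_x f · ∂_y g − ∂_y f · ∂_x g), all partial derivatives evaluated at (H,x,y). Then for all smooth f, g, k : ℝ³ → ℝ the Jacobi identity holds: {f,{g,k}} + {g,{k,f}} + {k,{f,g}} = 0. In particular this bracket is a Poisson bracket on C^∞(ℝ³) with {H,x} = x, {H,y} = −y, {x,y} = sinh(γH)/γ. -/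

import Mathlib

open Real

/-- Partial derivative in the `H`-direction at a point of ℝ³. -/
noncomputable def pdH (f : ℝ × ℝ × ℝ → ℝ) (p : ℝ × ℝ × ℝ) : ℝ :=
  fderiv ℝ f p (1, 0, 0)

/-- Partial derivative in the `x`-direction at a point of ℝ³. -/
noncomputable def pdx (f : ℝ × ℝ × ℝ → ℝ) (p : ℝ × ℝ × ℝ) : ℝ :=
  fderiv ℝ f p (0, 1, 0)

/-- Partial derivative in the `y`-direction at a point of ℝ³. -/
noncomputable def pdy (f : ℝ × ℝ × ℝ → ℝ) (p : ℝ × ℝ × ℝ) : ℝ :=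
  fderiv ℝ f p (0, 0, 1)

/-- The bracket {f,g} = x(∂_H f ∂_x g − ∂_x f ∂_H g) − y(∂_H f ∂_y g − ∂_y f ∂_H g)
    + (sinh(γH)/γ)(∂_x f ∂_y g − ∂_y f ∂_x g) on functions on ℝ³ (coordinates (H,x,y)). -/
noncomputable def pbracket (γ : ℝ) (f g : ℝ × ℝ × ℝ → ℝ) (p : ℝ × ℝ × ℝ) : ℝ :=
  p.2.1 * (pdH f p * pdx g p - pdx f p * pdH g p)
    - p.2.2 * (pdH f p * pdy g p - pdy f p * pdH g p)
    + (Real.sinh (γ * p.1) / γ) * (pdx f p * pdy g p - pdy f p * pdx g p)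

/-- Second directional derivative. -/
noncomputable def D2 (f : ℝ × ℝ × ℝ → ℝ) (p v w : ℝ × ℝ × ℝ) : ℝ :=
  fderiv ℝ (fderiv ℝ f) p v w

lemma smooth_pd {f : ℝ × ℝ × ℝ → ℝ} (hf : ContDiff ℝ (⊤ : ℕ∞) f) (v : ℝ × ℝ × ℝ) :
    ContDiff ℝ (⊤ : ℕ∞) (fun q => fderiv ℝ f q v) :=
  (hf.fderiv_right (by simp)).clm_apply contDiff_const

lemma hasFDerivAt_pd {f : ℝ × ℝ × ℝ → ℝ} (hf : ContDiff ℝ (⊤ : ℕ∞) f) (v p : ℝ × ℝ × ℝ) :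
    HasFDerivAt (fun q => fderiv ℝ f q v)
      ((fderiv ℝ (fderiv ℝ f) p).flip v) p := by
  have hd : DifferentiableAt ℝ (fderiv ℝ f) p :=
    ((hf.fderiv_right (m := (⊤ : ℕ∞)) (by simp)).differentiable (by simp)) p
  have h1 := ((smooth_pd hf v).differentiable (by simp) p).hasFDerivAt
  have e : fderiv ℝ (fun q => fderiv ℝ f q v) p =
      (fderiv ℝ f p).comp (fderiv ℝ (fun _ : ℝ × ℝ × ℝ => v) p)
        + (fderiv ℝ (fderiv ℝ f) p).flip v :=
    fderiv_clm_apply hd (differentiableAt_const v)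
  rw [e] at h1
  simpa using h1

lemma D2_symm {f : ℝ × ℝ × ℝ → ℝ} (hf : ContDiff ℝ (⊤ : ℕ∞) f) (p v w : ℝ × ℝ × ℝ) :
    D2 f p v w = D2 f p w v :=
  second_derivative_symmetric
    (fun y => ((hf.differentiable (by simp)) y).hasFDerivAt)
    (((hf.fderiv_right (m := (⊤ : ℕ∞)) (by simp)).differentiable (by simp) p).hasFDerivAt) v w

lemma fderiv_pbracket (γ : ℝ) (hγ : γ ≠ 0) {g k : ℝ × ℝ × ℝ → ℝ}
    (hg : ContDiff ℝ (⊤ : ℕ∞) g) (hk : ContDiff ℝ (⊤ : ℕ∞) k) (p v : ℝ × ℝ × ℝ) :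
    fderiv ℝ (pbracket γ g k) p v =
      v.2.1 * (pdH g p * pdx k p - pdx g p * pdH k p)
      + p.2.1 * (D2 g p v (1,0,0) * pdx k p + pdH g p * D2 k p v (0,1,0)
          - D2 g p v (0,1,0) * pdH k p - pdx g p * D2 k p v (1,0,0))
      - v.2.2 * (pdH g p * pdy k p - pdy g p * pdH k p)
      - p.2.2 * (D2 g p v (1,0,0) * pdy k p + pdH g p * D2 k p v (0,0,1)
          - D2 g p v (0,0,1) * pdH k p - pdy g p * D2 k p v (1,0,0))
      + Real.cosh (γ * p.1) * v.1 * (pdx g p * pdy k p - pdy g p * pdx k p)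
      + (Real.sinh (γ * p.1) / γ) * (D2 g p v (0,1,0) * pdy k p + pdx g p * D2 k p v (0,0,1)
          - D2 g p v (0,0,1) * pdx k p - pdy g p * D2 k p v (0,1,0)) := by
  have hgH := hasFDerivAt_pd hg (1,0,0) p
  have hgx := hasFDerivAt_pd hg (0,1,0) p
  have hgy := hasFDerivAt_pd hg (0,0,1) p
  have hkH := hasFDerivAt_pd hk (1,0,0) p
  have hkx := hasFDerivAt_pd hk (0,1,0) p
  have hky := hasFDerivAt_pd hk (0,0,1) p
  have hX : HasFDerivAt (fun q : ℝ × ℝ × ℝ => q.2.1)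
      ((ContinuousLinearMap.fst ℝ ℝ ℝ).comp (ContinuousLinearMap.snd ℝ ℝ (ℝ × ℝ))) p :=
    hasFDerivAt_fst.comp p hasFDerivAt_snd
  have hY : HasFDerivAt (fun q : ℝ × ℝ × ℝ => q.2.2)
      ((ContinuousLinearMap.snd ℝ ℝ ℝ).comp (ContinuousLinearMap.snd ℝ ℝ (ℝ × ℝ))) p :=
    hasFDerivAt_snd.comp p hasFDerivAt_snd
  have hsinh : HasFDerivAt (fun q : ℝ × ℝ × ℝ => Real.sinh (γ * q.1))
      (Real.cosh (γ * p.1) • (γ • ContinuousLinearMap.fst ℝ ℝ (ℝ × ℝ))) p :=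
    HasDerivAt.comp_hasFDerivAt (h₂ := Real.sinh) (f := fun q : ℝ × ℝ × ℝ => γ * q.1) p
      (Real.hasDerivAt_sinh (γ * p.1)) ((hasFDerivAt_fst (𝕜 := ℝ) (p := p)).const_mul γ)
  have hT : HasFDerivAt (fun q : ℝ × ℝ × ℝ => Real.sinh (γ * q.1) / γ)
      (γ⁻¹ • (Real.cosh (γ * p.1) • (γ • ContinuousLinearMap.fst ℝ ℝ (ℝ × ℝ)))) p := by
    simpa only [div_eq_mul_inv] using hsinh.mul_const γ⁻¹
  have H := ((hX.mul ((hgH.mul hkx).sub (hgx.mul hkH))).sub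
      (hY.mul ((hgH.mul hky).sub (hgy.mul hkH)))).add
      (hT.mul ((hgx.mul hky).sub (hgy.mul hkx)))
  have HH : HasFDerivAt (pbracket γ g k) _ p := H
  rw [HH.fderiv]
  simp only [pdH, pdx, pdy, D2, ContinuousLinearMap.add_apply, ContinuousLinearMap.sub_apply,
    ContinuousLinearMap.smul_apply, ContinuousLinearMap.coe_smul', Pi.smul_apply,
    ContinuousLinearMap.flip_apply, ContinuousLinearMap.comp_apply,
    ContinuousLinearMap.coe_fst', ContinuousLinearMap.coe_snd', smul_eq_mul,
    Pi.mul_apply, Pi.sub_apply]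
  field_simp
  ring

/-- Fix γ ≠ 0.  For all smooth f, g, k : ℝ³ → ℝ the Jacobi identity
{f,{g,k}} + {g,{k,f}} + {k,{f,g}} = 0 holds, so the bracket is a Poisson bracket with
{H,x} = x, {H,y} = −y, {x,y} = sinh(γH)/γ. -/
theorem statement5 (γ : ℝ) (hγ : γ ≠ 0) :
    (∀ f g k : ℝ × ℝ × ℝ → ℝ, ContDiff ℝ (⊤ : ℕ∞) f → ContDiff ℝ (⊤ : ℕ∞) g → ContDiff ℝ (⊤ : ℕ∞) k →
      ∀ p : ℝ × ℝ × ℝ,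
        pbracket γ f (pbracket γ g k) p + pbracket γ g (pbracket γ k f) p
          + pbracket γ k (pbracket γ f g) p = 0) ∧
    (∀ p : ℝ × ℝ × ℝ, pbracket γ (fun q => q.1) (fun q => q.2.1) p = p.2.1) ∧
    (∀ p : ℝ × ℝ × ℝ, pbracket γ (fun q => q.1) (fun q => q.2.2) p = -p.2.2) ∧
    (∀ p : ℝ × ℝ × ℝ,
      pbracket γ (fun q => q.2.1) (fun q => q.2.2) p = Real.sinh (γ * p.1) / γ) := by
  have hfst : ∀ p : ℝ × ℝ × ℝ, fderiv ℝ (fun q : ℝ × ℝ × ℝ => q.1) p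
      = ContinuousLinearMap.fst ℝ ℝ (ℝ × ℝ) := fun p => hasFDerivAt_fst.fderiv
  have hsnd1 : ∀ p : ℝ × ℝ × ℝ, fderiv ℝ (fun q : ℝ × ℝ × ℝ => q.2.1) p
      = (ContinuousLinearMap.fst ℝ ℝ ℝ).comp (ContinuousLinearMap.snd ℝ ℝ (ℝ × ℝ)) :=
    fun p => (hasFDerivAt_fst.comp p hasFDerivAt_snd).fderiv
  have hsnd2 : ∀ p : ℝ × ℝ × ℝ, fderiv ℝ (fun q : ℝ × ℝ × ℝ => q.2.2) p
      = (ContinuousLinearMap.snd ℝ ℝ ℝ).comp (ContinuousLinearMap.snd ℝ ℝ (ℝ × ℝ)) :=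
    fun p => (hasFDerivAt_snd.comp p hasFDerivAt_snd).fderiv
  refine ⟨?_, ?_, ?_, ?_⟩
  · intro f g k hf hg hk p
    rw [pbracket, pbracket, pbracket]
    simp only [pdH, pdx, pdy]
    rw [fderiv_pbracket γ hγ hg hk p (1,0,0), fderiv_pbracket γ hγ hg hk p (0,1,0),
      fderiv_pbracket γ hγ hg hk p (0,0,1),
      fderiv_pbracket γ hγ hk hf p (1,0,0), fderiv_pbracket γ hγ hk hf p (0,1,0),
      fderiv_pbracket γ hγ hk hf p (0,0,1),
      fderiv_pbracket γ hγ hf hg p (1,0,0), fderiv_pbracket γ hγ hf hg p (0,1,0),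
      fderiv_pbracket γ hγ hf hg p (0,0,1)]
    simp only [pdH, pdx, pdy]
    rw [D2_symm hf p (0,1,0) (1,0,0), D2_symm hf p (0,0,1) (1,0,0), D2_symm hf p (0,0,1) (0,1,0),
      D2_symm hg p (0,1,0) (1,0,0), D2_symm hg p (0,0,1) (1,0,0), D2_symm hg p (0,0,1) (0,1,0),
      D2_symm hk p (0,1,0) (1,0,0), D2_symm hk p (0,0,1) (1,0,0), D2_symm hk p (0,0,1) (0,1,0)]
    norm_num
    ring
  · intro p
    simp [pbracket, pdH, pdx, pdy, hfst, hsnd1, hsnd2]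
  · intro p
    simp [pbracket, pdH, pdx, pdy, hfst, hsnd1, hsnd2]
  · intro p
    simp [pbracket, pdH, pdx, pdy, hfst, hsnd1, hsnd2]
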